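/- Every vertex-transitive intrinsic simplicial complex that is CAT(0) with the equilateral flat metric is a single simplex. -/

import Mathlib

open scoped RealInnerProductSpace

namespace MGC



/-! ## Generic collapsibility on posets -/

section Collapse

variable {α : Type*} [PartialOrder α]

/-- `σ` is a free face of `K` with unique proper coface `τ`. -/
def IsFreePair (K : Set α) (σ τ : α) : Prop :=
  σ ∈ K ∧ τ ∈ K ∧ σ < τ ∧ ∀ ρ ∈ K, σ < ρ → ρ = τ

/-- An elementary collapse removes a free face together with its unique coface. -/
def ElemCollapse (K L : Set α) : Prop :=
  ∃ σ τ, IsFreePair K σ τ ∧ L = K \ {σ, τ}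

/-- `K` collapses onto `L` by a sequence of elementary collapses. -/
def CollapsesTo : Set α → Set α → Prop := Relation.ReflTransGen ElemCollapse

/-- `σ` is an inclusion-maximal face (facet) of `K`. -/
def IsMaxFace (K : Set α) (σ : α) : Prop := σ ∈ K ∧ ∀ τ ∈ K, σ ≤ τ → τ = σ

/-- Combinatorial equivalence: an isomorphism of face posets. -/
def CombEquiv {β : Type*} [PartialOrder β] (K : Set α) (L : Set β) : Prop :=
  ∃ φ : α → β, Set.BijOn φ K L ∧ ∀ x ∈ K, ∀ y ∈ K, (x ≤ y ↔ φ x ≤ φ y)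

end Collapse

/-- A complex of subsets of `X` is collapsible if it collapses onto a single vertex. -/
def CollapsibleSet {X : Type*} (K : Set (Set X)) : Prop := ∃ x : X, CollapsesTo K {{x}}

/-- A complex of finite subsets of `V` is collapsible if it collapses onto a single vertex. -/
def CollapsibleFin {V : Type*} (K : Set (Finset V)) : Prop := ∃ v : V, CollapsesTo K {{v}}

/-! ## Geodesics and CAT(k) spaces -/

section MetricGeom

variable {X : Type*} [MetricSpace X]

/-- A geodesic segment from `x` to `y`, affinely parametrized on `[0,1]`. -/
def IsGeodSeg (γ : ℝ → X) (x y : X) : Prop :=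
  γ 0 = x ∧ γ 1 = y ∧
    ∀ s ∈ Set.Icc (0:ℝ) 1, ∀ t ∈ Set.Icc (0:ℝ) 1, dist (γ s) (γ t) = |s - t| * dist x y

/-- A subset is (geodesically) convex if any two of its points are joined by a geodesic
segment of the ambient space lying entirely in the subset. -/
def MetricConvexSet (A : Set X) : Prop :=
  ∀ x ∈ A, ∀ y ∈ A, ∃ γ : ℝ → X, IsGeodSeg γ x y ∧ ∀ t ∈ Set.Icc (0:ℝ) 1, γ t ∈ A

end MetricGeom

/-- Inverse hyperbolic cosine. -/
noncomputable def arcosh (u : ℝ) : ℝ := Real.log (u + Real.sqrt (u ^ 2 - 1))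

/-- The distance, in the model plane of constant curvature `k`, between the third vertex of a
comparison triangle with side lengths `a = |yz|`, `b = |xz|`, `c = |xy|` and the point lying on
the side `[x,y]` at distance `t * c` from `x` (law of cosines in constant curvature `k`). -/
noncomputable def cmpDist (k a b c t : ℝ) : ℝ :=
  if k = 0 then
    Real.sqrt (b ^ 2 + t ^ 2 * c ^ 2 - t * (b ^ 2 + c ^ 2 - a ^ 2))
  else if 0 < k then
    (Real.sqrt k)⁻¹ * Real.arccos
      (Real.cos (Real.sqrt k * b) * Real.cos (Real.sqrt k * (t * c)) +
        Real.sin (Real.sqrt k * b) * Real.sin (Real.sqrt k * (t * c)) *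
          ((Real.cos (Real.sqrt k * a) - Real.cos (Real.sqrt k * b) * Real.cos (Real.sqrt k * c)) /
            (Real.sin (Real.sqrt k * b) * Real.sin (Real.sqrt k * c))))
  else
    (Real.sqrt (-k))⁻¹ * arcosh
      (Real.cosh (Real.sqrt (-k) * b) * Real.cosh (Real.sqrt (-k) * (t * c)) -
        Real.sinh (Real.sqrt (-k) * b) * Real.sinh (Real.sqrt (-k) * (t * c)) *
          ((Real.cosh (Real.sqrt (-k) * b) * Real.cosh (Real.sqrt (-k) * c) -
              Real.cosh (Real.sqrt (-k) * a)) /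
            (Real.sinh (Real.sqrt (-k) * b) * Real.sinh (Real.sqrt (-k) * c))))

/-- `X` is a CAT(k) space: it is geodesic (up to the critical distance `π/√k` when `k > 0`),
and every geodesic triangle (of perimeter `< 2π/√k` when `k > 0`) satisfies the comparison
condition against the model plane of constant curvature `k`. -/
def IsCAT (k : ℝ) (X : Type*) [MetricSpace X] : Prop :=
  (∀ x y : X, (0 < k → dist x y < Real.pi / Real.sqrt k) → ∃ γ : ℝ → X, IsGeodSeg γ x y) ∧
  ∀ (x y z : X) (γ : ℝ → X), IsGeodSeg γ x y →
    (0 < k → dist x y + dist y z + dist z x < 2 * Real.pi / Real.sqrt k) →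
    ∀ t ∈ Set.Icc (0:ℝ) 1, dist z (γ t) ≤ cmpDist k (dist y z) (dist x z) (dist x y) t




/-! ## Abstract simplicial complexes and metric (intrinsic) realizations -/

/-- A finite abstract simplicial complex on the vertex type `V`. -/
structure SimpComplex (V : Type*) where
  faces : Set (Finset V)
  finite : faces.Finite
  not_empty_mem : ∅ ∉ faces
  down_closed : ∀ σ ∈ faces, ∀ τ : Finset V, τ ⊆ σ → τ ≠ ∅ → τ ∈ faces

/-- A realization of an abstract simplicial complex `K` as an intrinsic metric complex on the
metric space `X`: each face is realized by a compact connected subset, realizations are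
compatible with the face structure (monotone, intersections match, vertices are points),
and the realizations cover `X`. -/
structure MetricRealization {V : Type*} [DecidableEq V] (K : SimpComplex V)
    (X : Type*) [MetricSpace X] where
  realize : Finset V → Set X
  vertexPt : V → X
  realize_empty : realize ∅ = ∅
  realize_vertex : ∀ v : V, {v} ∈ K.faces → realize {v} = {vertexPt v}
  realize_nonempty : ∀ σ ∈ K.faces, (realize σ).Nonempty
  realize_compact : ∀ σ ∈ K.faces, IsCompact (realize σ)
  realize_connected : ∀ σ ∈ K.faces, IsConnected (realize σ)
  realize_mono : ∀ σ ∈ K.faces, ∀ τ ∈ K.faces, σ ⊆ τ → realize σ ⊆ realize τ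
  realize_strict : ∀ σ ∈ K.faces, ∀ τ ∈ K.faces, σ ⊂ τ → realize σ ≠ realize τ
  realize_inter : ∀ σ ∈ K.faces, ∀ τ ∈ K.faces, realize σ ∩ realize τ = realize (σ ∩ τ)
  realize_cover : (⋃ σ ∈ K.faces, realize σ) = Set.univ

/-- The underlying space of the star of the face `σ`: the union of the (realizations of)
all faces containing `σ`. -/
def starSpace {V X : Type*} [DecidableEq V] [MetricSpace X] (K : SimpComplex V)
    (R : MetricRealization K X) (σ : Finset V) : Set X :=
  ⋃ τ ∈ {τ | τ ∈ K.faces ∧ σ ⊆ τ}, R.realize τ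

/-! ### Metric conditions on the faces -/

/-- The `i`-th vertex of the standard regular Euclidean simplex with `m` vertices and all
edge lengths equal to `1`. -/
noncomputable def regVertex (m : ℕ) (i : Fin m) : EuclideanSpace ℝ (Fin m) :=
  (Real.sqrt 2)⁻¹ • EuclideanSpace.single i (1 : ℝ)

/-- The complex (via its metric realization `R`) carries the equilateral flat metric:
every face, with the induced metric, is isometric to a regular Euclidean simplex with unit
edge lengths, matching vertices to vertices. -/
def EquilateralFlat {V X : Type*} [DecidableEq V] [MetricSpace X] (K : SimpComplex V)
    (R : MetricRealization K X) : Prop :=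
  ∀ σ ∈ K.faces, ∃ φ : X → EuclideanSpace ℝ (Fin σ.card),
    Set.BijOn φ (R.realize σ) (convexHull ℝ (Set.range (regVertex σ.card))) ∧
    (∀ x ∈ R.realize σ, ∀ y ∈ R.realize σ, dist (φ x) (φ y) = dist x y) ∧
    ∀ v ∈ σ, ∃ i : Fin σ.card, φ (R.vertexPt v) = regVertex σ.card i

/-- `n` is an outward normal of the facet of the simplex with vertices `p` opposite to the
vertex `p i`. -/
def IsOutwardNormal {m : ℕ} (p : Fin m → EuclideanSpace ℝ (Fin m)) (i : Fin m)
    (n : EuclideanSpace ℝ (Fin m)) : Prop :=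
  n ∈ vectorSpan ℝ (Set.range p) ∧ n ≠ 0 ∧
    (∀ a b : Fin m, a ≠ i → b ≠ i → ⟪n, p a - p b⟫ = 0) ∧
    ∀ a : Fin m, a ≠ i → ⟪n, p i - p a⟫ < 0

/-- A Euclidean simplex is non-obtuse if the dihedral angle between any two of its facets is
at most `π/2`; equivalently, outward normals of distinct facets have non-positive inner
product. -/
def IsNonObtuseSimplex {m : ℕ} (p : Fin m → EuclideanSpace ℝ (Fin m)) : Prop :=
  ∀ i j : Fin m, i ≠ j → ∀ ni nj : EuclideanSpace ℝ (Fin m),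
    IsOutwardNormal p i ni → IsOutwardNormal p j nj → ⟪ni, nj⟫ ≤ 0

/-- The complex (via its metric realization `R`) carries a non-obtuse piecewise Euclidean
metric: every face, with the induced metric, is isometric to a non-obtuse Euclidean simplex,
matching vertices to vertices. -/
def NonObtuseFlat {V X : Type*} [DecidableEq V] [MetricSpace X] (K : SimpComplex V)
    (R : MetricRealization K X) : Prop :=
  ∀ σ ∈ K.faces, ∃ p : Fin σ.card → EuclideanSpace ℝ (Fin σ.card),
    AffineIndependent ℝ p ∧ IsNonObtuseSimplex p ∧
    ∃ φ : X → EuclideanSpace ℝ (Fin σ.card),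
      Set.BijOn φ (R.realize σ) (convexHull ℝ (Set.range p)) ∧
      (∀ x ∈ R.realize σ, ∀ y ∈ R.realize σ, dist (φ x) (φ y) = dist x y) ∧
      ∀ v ∈ σ, ∃ i : Fin σ.card, φ (R.vertexPt v) = p i

/-- Collapsibility of an abstract simplicial complex. -/
def SimpComplex.Collapsible {V : Type*} (K : SimpComplex V) : Prop := CollapsibleFin K.faces

/-- The automorphism group of `K` acts transitively on the vertices. -/
def VertexTransitive {V : Type*} [DecidableEq V] (K : SimpComplex V) : Prop :=
  ∀ v w : V, {v} ∈ K.faces → {w} ∈ K.faces →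
    ∃ e : V ≃ V, (∀ σ : Finset V, σ ∈ K.faces ↔ σ.image e ∈ K.faces) ∧ e v = w

/-! ## Intrinsic polytopal complexes on a metric space -/

/-- An intrinsic polytopal complex structure on the metric space `X`: a finite family of
compact connected cells covering `X`, closed under (nonempty) intersections. -/
structure MetPolyComplex (X : Type*) [MetricSpace X] where
  faces : Set (Set X)
  finite : faces.Finite
  face_nonempty : ∀ F ∈ faces, F.Nonempty
  face_compact : ∀ F ∈ faces, IsCompact F
  face_connected : ∀ F ∈ faces, IsConnected F
  inter_mem : ∀ F ∈ faces, ∀ G ∈ faces, (F ∩ G).Nonempty → F ∩ G ∈ faces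
  cover : ⋃₀ faces = Set.univ

/-- The underlying space of the star of the face `F` in the polytopal complex `C`. -/
def polyStar {X : Type*} [MetricSpace X] (C : MetPolyComplex X) (F : Set X) : Set X :=
  ⋃₀ {G | G ∈ C.faces ∧ F ⊆ G}

/-! ## Cube complexes -/

/-- The unit cube `[0,1]^k`. -/
def unitCube (k : ℕ) : Set (EuclideanSpace ℝ (Fin k)) := {x | ∀ i, x i ∈ Set.Icc (0:ℝ) 1}

/-- A face of the unit cube `[0,1]^k`: some coordinates are frozen to `0` or `1`. -/
def IsCubeFace {k : ℕ} (Q : Set (EuclideanSpace ℝ (Fin k))) : Prop :=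
  ∃ a : Fin k → Set ℝ, (∀ i, a i = {0} ∨ a i = {1} ∨ a i = Set.Icc (0:ℝ) 1) ∧
    Q = {x | ∀ i, x i ∈ a i}

/-- A (bundled) cube complex: a metric space `X` together with an intrinsic polytopal complex
structure in which every cell is isometric to a unit Euclidean cube, in such a way that the
cells contained in it correspond exactly to the faces of the cube. -/
structure CubeComplexB where
  X : Type
  [ms : MetricSpace X]
  faces : Set (Set X)
  finite : faces.Finite
  face_nonempty : ∀ F ∈ faces, F.Nonempty
  face_compact : ∀ F ∈ faces, IsCompact F
  inter_mem : ∀ F ∈ faces, ∀ G ∈ faces, (F ∩ G).Nonempty → F ∩ G ∈ faces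
  cover : ⋃₀ faces = Set.univ
  cube_chart : ∀ F ∈ faces, ∃ (k : ℕ) (φ : X → EuclideanSpace ℝ (Fin k)),
    Set.BijOn φ F (unitCube k) ∧
    (∀ x ∈ F, ∀ y ∈ F, dist (φ x) (φ y) = dist x y) ∧
    ∀ G : Set X, (G ∈ faces ∧ G ⊆ F) ↔ ∃ Q, IsCubeFace Q ∧ G = F ∩ φ ⁻¹' Q

attribute [instance] CubeComplexB.ms


/-! ## Geometric polytopal complexes in a real vector space -/

section Geom

variable {E : Type*} [NormedAddCommGroup E] [NormedSpace ℝ E]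

/-- A (nonempty) polytope: the convex hull of finitely many points. -/
def IsPolytope (P : Set E) : Prop := ∃ s : Finset E, s.Nonempty ∧ P = convexHull ℝ (s : Set E)

/-- `F` is a (nonempty) face of the polytope `P`: a nonempty convex extreme subset. -/
def IsFaceOfPoly (P F : Set E) : Prop := F.Nonempty ∧ Convex ℝ F ∧ IsExtreme ℝ P F

/-- A finite geometric polytopal complex: a finite family of polytopes such that every face
of a member is a member and the intersection of any two members is a face of both. -/
structure GeomComplex (E : Type*) [NormedAddCommGroup E] [NormedSpace ℝ E] where
  faces : Set (Set E)
  finite : faces.Finite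
  poly : ∀ F ∈ faces, IsPolytope F
  down : ∀ F ∈ faces, ∀ G : Set E, IsFaceOfPoly F G → G ∈ faces
  inter : ∀ F ∈ faces, ∀ G ∈ faces, (F ∩ G).Nonempty →
    IsFaceOfPoly F (F ∩ G) ∧ IsFaceOfPoly G (F ∩ G)

/-- The underlying space of a geometric polytopal complex. -/
def gcSpace (K : GeomComplex E) : Set E := ⋃₀ K.faces

/-- A geometric polytopal complex is simplicial if all its faces are simplices. -/
def IsSimplicial (K : GeomComplex E) : Prop :=
  ∀ F ∈ K.faces, ∃ s : Finset E,
    AffineIndependent ℝ (fun x : (s : Set E) => (x : E)) ∧ F = convexHull ℝ (s : Set E)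

/-- The barycenter of a polytope: the centroid of its extreme points (vertices). -/
noncomputable def bary (F : Set E) : E :=
  open scoped Classical in
  if h : (Set.extremePoints ℝ F).Finite then h.toFinset.centroid ℝ id else 0

/-- The faces of the derived (barycentric) subdivision of a complex: simplices spanned by
barycenters of chains of faces. -/
def sdFaces (K : Set (Set E)) : Set (Set E) :=
  {F | ∃ c : Set (Set E), c ⊆ K ∧ c.Nonempty ∧ c.Finite ∧ IsChain (· ⊆ ·) c ∧
        F = convexHull ℝ (bary '' c)}

/-- The `m`-fold iterated derived subdivision. -/
def sdIter (m : ℕ) (K : Set (Set E)) : Set (Set E) := sdFaces^[m] K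

/-- The boundary subcomplex: the faces lying in the topological frontier of the underlying
space. -/
def bdry (K : Set (Set E)) : Set (Set E) := {F ∈ K | F ⊆ frontier (⋃₀ K)}

/-- The restriction of a complex to the subset `A`: all faces lying in `A`. -/
def restrict (K : Set (Set E)) (A : Set E) : Set (Set E) := {F ∈ K | F ⊆ A}

/-- Deletion of the vertex `x` from a geometric simplicial complex. -/
def vdel (K : Set (Set E)) (x : E) : Set (Set E) := {F ∈ K | x ∉ F}

/-- The link of the vertex `x` in a geometric simplicial complex. -/
def vlink (K : Set (Set E)) (x : E) : Set (Set E) :=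
  {F ∈ K | x ∉ F ∧ convexHull ℝ (insert x F) ∈ K}

/-- Non-evasiveness of a geometric simplicial complex: a single point is non-evasive, and a
complex is non-evasive if it has a vertex whose link and deletion are both non-evasive. -/
inductive NonEvasive : Set (Set E) → Prop
  | point (x : E) : NonEvasive {{x}}
  | step (K : Set (Set E)) (x : E) : {x} ∈ K →
      NonEvasive (vlink K x) → NonEvasive (vdel K x) → NonEvasive K

/-- A non-evasiveness step: deletion of a vertex whose link is non-evasive. -/
def NEStep (K L : Set (Set E)) : Prop :=
  ∃ x : E, {x} ∈ K ∧ NonEvasive (vlink K x) ∧ L = vdel K x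

/-- `K ↘_NE L`: `L` is obtained from `K` by a sequence of non-evasiveness steps. -/
def NECollapses : Set (Set E) → Set (Set E) → Prop := Relation.ReflTransGen NEStep

/-- A star-shaped subset of a real vector space. -/
def StarShaped (A : Set E) : Prop := ∃ x ∈ A, ∀ y ∈ A, segment ℝ x y ⊆ A

/-- `D` is a subdivision of the geometric complex `K`. -/
def SubdividesG (D K : GeomComplex E) : Prop :=
  gcSpace D = gcSpace K ∧ ∀ F ∈ D.faces, ∃ G ∈ K.faces, F ⊆ G

/-- The complex of all (nonempty) faces of a polytope `P`, including `P` itself. -/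
def polyFaces (P : Set E) : Set (Set E) := {F | IsFaceOfPoly P F}

/-- The boundary complex of a polytope `P`: all proper (nonempty) faces. -/
def properFaces (P : Set E) : Set (Set E) := {F | IsFaceOfPoly P F ∧ F ≠ P}

/-- The star of a face `μ` in the complex `K`: all faces contained in a face of `K`
containing `μ`. -/
def starIn (K : Set (Set E)) (μ : Set E) : Set (Set E) :=
  {F ∈ K | ∃ G ∈ K, μ ⊆ G ∧ F ⊆ G}

end Geom

/-! ## PL equivalence -/

/-- Two geometric complexes are PL homeomorphic if they admit combinatorially equivalent
subdivisions. -/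
def PLHomeoGeom {E F : Type*} [NormedAddCommGroup E] [NormedSpace ℝ E]
    [NormedAddCommGroup F] [NormedSpace ℝ F] (K : GeomComplex E) (L : GeomComplex F) : Prop :=
  ∃ (K' : GeomComplex E) (L' : GeomComplex F),
    SubdividesG K' K ∧ SubdividesG L' L ∧ CombEquiv K'.faces L'.faces

/-- A subdivision of a bundled cube complex: an intrinsic polytopal complex on the same
metric space, each of whose cells lies in a cell of the cube complex. -/
def CubeSubdivides (C : CubeComplexB) (D : MetPolyComplex C.X) : Prop :=
  ∀ F ∈ D.faces, ∃ G ∈ C.faces, F ⊆ G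

/-- A geometric complex `K` and a cube complex `C` are PL homeomorphic: they admit
combinatorially equivalent subdivisions. -/
def PLHomeoGeomCube {E : Type*} [NormedAddCommGroup E] [NormedSpace ℝ E]
    (K : GeomComplex E) (C : CubeComplexB) : Prop :=
  ∃ (K' : GeomComplex E) (D : MetPolyComplex C.X),
    SubdividesG K' K ∧ CubeSubdivides C D ∧ CombEquiv K'.faces D.faces

/-! ## Spherical polytopal complexes -/

section Spherical

variable {E : Type*} [NormedAddCommGroup E] [InnerProductSpace ℝ E]

/-- The cone (with apex `0`) over a subset `F`. -/
def coneOf (F : Set E) : Set E := {y | ∃ t : ℝ, 0 ≤ t ∧ ∃ x ∈ F, y = t • x}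

/-- A polyhedral cone: the cone over the convex hull of a finite set. -/
def IsPolyCone (C : Set E) : Prop := ∃ s : Finset E, C = coneOf (convexHull ℝ (s : Set E))

/-- Radial projection onto the unit sphere. -/
noncomputable def sphNormalize (x : E) : E := ‖x‖⁻¹ • x

/-- The vertices of a spherical polytope `F`: the points of `F` spanning extreme rays of the
cone over `F`. -/
def svert (F : Set E) : Set E := {x ∈ F | IsExtreme ℝ (coneOf F) (coneOf {x})}

/-- The (spherical) barycenter of a spherical polytope: the radial projection of the centroid
of its vertices. -/
noncomputable def sbary (F : Set E) : E :=
  open scoped Classical in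
  if h : (svert F).Finite then sphNormalize (h.toFinset.centroid ℝ id) else 0

/-- The faces of the derived (barycentric) subdivision of a spherical complex: the spherical
simplices spanned by the barycenters of chains of faces. -/
def ssdFaces (K : Set (Set E)) : Set (Set E) :=
  {F | ∃ c : Set (Set E), c ⊆ K ∧ c.Nonempty ∧ c.Finite ∧ IsChain (· ⊆ ·) c ∧
        F = sphNormalize '' convexHull ℝ (sbary '' c)}

/-- The linear dimension of the cone spanned by a face. -/
noncomputable def cdim (F : Set E) : ℕ := Module.finrank ℝ (Submodule.span ℝ F)

end Spherical

/-- The unit sphere `S^d` inside `ℝ^{d+1}`. -/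
def uSphere (d : ℕ) : Set (EuclideanSpace ℝ (Fin (d+1))) := Metric.sphere 0 1

/-- A geometric polytopal complex in the unit sphere `S^d`: a finite family of spherical
polytopes (each contained in an open hemisphere), such that every face of a member is a
member and the intersection of two members is a face of both (faces of a spherical polytope
being the radial projections of the faces of the cone over it). -/
structure SphComplex (d : ℕ) where
  faces : Set (Set (EuclideanSpace ℝ (Fin (d+1))))
  finite : faces.Finite
  face_nonempty : ∀ F ∈ faces, F.Nonempty
  sub_sphere : ∀ F ∈ faces, F ⊆ uSphere d
  hemi : ∀ F ∈ faces, ∃ u : EuclideanSpace ℝ (Fin (d+1)), ‖u‖ = 1 ∧ ∀ x ∈ F, 0 < ⟪u, x⟫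
  polycone : ∀ F ∈ faces, IsPolyCone (coneOf F)
  down : ∀ F ∈ faces, ∀ G : Set (EuclideanSpace ℝ (Fin (d+1))), G.Nonempty → G ⊆ uSphere d →
    Convex ℝ (coneOf G) → IsExtreme ℝ (coneOf F) (coneOf G) → G ∈ faces
  inter : ∀ F ∈ faces, ∀ G ∈ faces, (F ∩ G).Nonempty →
    IsExtreme ℝ (coneOf F) (coneOf (F ∩ G)) ∧ IsExtreme ℝ (coneOf G) (coneOf (F ∩ G))

/-- The underlying space of a spherical complex. -/
def sphSpace {d : ℕ} (K : SphComplex d) : Set (EuclideanSpace ℝ (Fin (d+1))) := ⋃₀ K.faces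

/-- A spherical complex is simplicial if each face is a spherical simplex, i.e. the radial
projection of the convex hull of linearly independent unit vectors. -/
def IsSphSimplicial {d : ℕ} (K : SphComplex d) : Prop :=
  ∀ F ∈ K.faces, ∃ s : Finset (EuclideanSpace ℝ (Fin (d+1))),
    (s : Set (EuclideanSpace ℝ (Fin (d+1)))) ⊆ uSphere d ∧
    LinearIndependent ℝ (fun x : (s : Set (EuclideanSpace ℝ (Fin (d+1)))) =>
      (x : EuclideanSpace ℝ (Fin (d+1)))) ∧
    F = sphNormalize '' convexHull ℝ (s : Set (EuclideanSpace ℝ (Fin (d+1))))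

/-- The closed hemisphere of `S^d` determined by the unit vector `u`. -/
def closedHemi {d : ℕ} (u : EuclideanSpace ℝ (Fin (d+1))) : Set (EuclideanSpace ℝ (Fin (d+1))) :=
  {x ∈ uSphere d | 0 ≤ ⟪u, x⟫}

/-- A hemisphere is in general position with respect to a complex if its boundary great
sphere contains no vertex of the complex. -/
def GeneralPosition {d : ℕ} (K : SphComplex d) (u : EuclideanSpace ℝ (Fin (d+1))) : Prop :=
  ∀ x : EuclideanSpace ℝ (Fin (d+1)), {x} ∈ K.faces → ⟪u, x⟫ ≠ 0

/-- The boundary subcomplex of a spherical `d`-complex: the faces contained in a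
`(d-1)`-dimensional face that lies in exactly one `d`-dimensional face. -/
def sbdry (d : ℕ) (K : Set (Set (EuclideanSpace ℝ (Fin (d+1))))) :
    Set (Set (EuclideanSpace ℝ (Fin (d+1)))) :=
  {F ∈ K | ∃ R ∈ K, F ⊆ R ∧ cdim R = d ∧ ∃! G, G ∈ K ∧ R ⊆ G ∧ cdim G = d + 1}

/-- The derived neighborhood `N(D, C)` of a subcomplex `D` of the spherical complex `C`:
the subcomplex of `sd C` consisting of all faces of stars of faces of `sd D`. -/
def derivedNbhd {E : Type*} [NormedAddCommGroup E] [InnerProductSpace ℝ E]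
    (D K : Set (Set E)) : Set (Set E) :=
  {F ∈ ssdFaces K | ∃ G ∈ ssdFaces K, F ⊆ G ∧ ∃ σ ∈ ssdFaces D, σ ⊆ G}

/-! ## Geometric realizations of abstract simplicial complexes, star-minimal functions and
discrete Morse matchings -/

section Morse

variable {V E : Type*} [DecidableEq V] [NormedAddCommGroup E] [NormedSpace ℝ E]

/-- A geometric realization of an abstract simplicial complex: the vertices are placed at
points of `E` so that each face spans a geometric simplex, and the geometric simplices
intersect along common faces. -/
structure GeomReal (K : SimpComplex V) (E : Type*) [NormedAddCommGroup E]
    [NormedSpace ℝ E] where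
  pos : V → E
  indep : ∀ σ ∈ K.faces, AffineIndependent ℝ (fun v : (σ : Set V) => pos v)
  inter : ∀ σ ∈ K.faces, ∀ τ ∈ K.faces,
    convexHull ℝ (pos '' σ) ∩ convexHull ℝ (pos '' τ) = convexHull ℝ (pos '' (σ ∩ τ : Finset V))

/-- The underlying polyhedron `|C|` of a geometric realization. -/
def gSpace {K : SimpComplex V} (R : GeomReal K E) : Set E :=
  ⋃ σ ∈ K.faces, convexHull ℝ (R.pos '' σ)

/-- The underlying space of the star of the face `σ`. -/
def gStar {K : SimpComplex V} (R : GeomReal K E) (σ : Finset V) : Set E :=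
  ⋃ τ ∈ {τ | τ ∈ K.faces ∧ σ ⊆ τ}, convexHull ℝ (R.pos '' τ)

/-- A star-minimal function on `|C|`: it is continuous, attains a unique absolute minimum
on the star of each face (including the empty face, whose star is all of `|C|`), and is
injective on vertices. -/
def StarMinimal {K : SimpComplex V} (R : GeomReal K E) (f : E → ℝ) : Prop :=
  ContinuousOn f (gSpace R) ∧
  (∀ σ : Finset V, (σ ∈ K.faces ∨ σ = ∅) →
    ∃ m ∈ gStar R σ, (∀ y ∈ gStar R σ, f m ≤ f y) ∧ ∀ y ∈ gStar R σ, f y = f m → y = m) ∧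
  ∀ v w : V, {v} ∈ K.faces → {w} ∈ K.faces → f (R.pos v) = f (R.pos w) → v = w

/-- A discrete vector field on the complex with faces `K`: a set of pairs `(σ, Σ)` with `σ`
a codimension-one face of `Σ`, such that no face belongs to two pairs. -/
def IsDVF (K : Set (Finset V)) (W : Set (Finset V × Finset V)) : Prop :=
  (∀ p ∈ W, p.1 ∈ K ∧ p.2 ∈ K ∧ p.1 ⊂ p.2 ∧ p.2.card = p.1.card + 1) ∧
  ∀ p ∈ W, ∀ q ∈ W, p ≠ q → p.1 ≠ q.1 ∧ p.2 ≠ q.2 ∧ p.1 ≠ q.2 ∧ p.2 ≠ q.1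

/-- The vector field `W` admits a closed gradient path. -/
def HasClosedGradPath (W : Set (Finset V × Finset V)) : Prop :=
  ∃ (k : ℕ) (p : ℕ → Finset V × Finset V), 1 ≤ k ∧ (∀ i ≤ k, p i ∈ W) ∧
    (∀ i < k, (p (i+1)).1 ⊆ (p i).2 ∧ (p (i+1)).1 ≠ (p i).1 ∧
      (p (i+1)).1.card + 1 = (p i).2.card) ∧
    (p k).1 = (p 0).1

/-- A Morse matching: a discrete vector field with no closed gradient path. -/
def IsMorseMatching (K : Set (Finset V)) (W : Set (Finset V × Finset V)) : Prop :=
  IsDVF K W ∧ ¬ HasClosedGradPath W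

end Morse

/-! ## Topological manifolds with boundary and triangulations -/

/-- The closed Euclidean half-space `{x : x 0 ≥ 0}` of dimension `n`. -/
def eucHalfSpace (n : ℕ) : Set (EuclideanSpace ℝ (Fin n)) :=
  {x | ∀ i : Fin n, (i : ℕ) = 0 → 0 ≤ x i}

/-- A compact topological `d`-manifold with (possibly empty) boundary: a Hausdorff space
locally homeomorphic to the closed half-space `ℝ^d_{≥0}`. -/
def IsTopManifoldWithBoundary (d : ℕ) (M : Type*) [TopologicalSpace M] : Prop :=
  T2Space M ∧ Nonempty (ChartedSpace (eucHalfSpace d) M)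

/-!
The isometric charts of the faces give barycentric coordinates, and these agree on common faces:
a point of `ρ ⊆ τ` has the same distances to the vertices of `ρ` in both charts, and a
sum-of-squares identity forces its remaining coordinates in `τ` to vanish. So an automorphism `e`
of `K` induces a map of `X` that permutes barycentric coordinates by `e`. It is an isometry on each
face, hence locally non-expanding, hence `1`-Lipschitz because `X` is geodesic.

In the CAT(0) space `X` the largest distance to a vertex has a unique minimiser `c` (by the CN
inequality). Every induced map fixes `c`, so by vertex transitivity `c` is at the same distance `r`
from all vertices. If `c` lies in a face with `m` vertices then `2 r² = 1 - 1 / m`; hence that face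
is unique and `2 r² < 1`. A vertex outside it would be joined to `c` by a geodesic that leaves the
closed star of the vertex through a point whose barycentric coordinate at the vertex is `0`; such
a point is at distance at least `1 / √2` from the vertex, yet within `r < 1 / √2` of it.
-/

lemma regVertex_apply (m : ℕ) (i j : Fin m) :
    regVertex m i j = if j = i then (√2)⁻¹ else 0 := by
  simp [regVertex]

lemma mem_convexHull_regVertex_iff {m : ℕ} (x : EuclideanSpace ℝ (Fin m)) :
    x ∈ convexHull ℝ (Set.range (regVertex m)) ↔
      (fun j => √2 * x j) ∈ stdSimplex ℝ (Fin m) := by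
  classical
  let L : EuclideanSpace ℝ (Fin m) →ₗ[ℝ] (Fin m → ℝ) :=
    √2 • (WithLp.linearEquiv 2 ℝ (Fin m → ℝ)).toLinearMap
  have hL : Function.Injective L := fun y z h => by
    ext j
    simpa [L] using congrFun h j
  have hrange : L '' Set.range (regVertex m) = Set.range fun i j => if i = j then 1 else 0 := by
    rw [← Set.range_comp]
    congr 1
    ext i j
    simp [L, regVertex_apply, eq_comm, mul_inv_cancel₀ (Real.sqrt_ne_zero'.2 two_pos)]
  rw [← hL.mem_set_image, LinearMap.image_convexHull, hrange,
    convexHull_basis_eq_stdSimplex]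
  rfl

section Geodesic

variable {X Y : Type*} [MetricSpace X] [MetricSpace Y] {γ : ℝ → X} {x y : X}

lemma IsGeodSeg.continuousOn (hγ : IsGeodSeg γ x y) : ContinuousOn γ (Set.Icc 0 1) :=
  (LipschitzOnWith.of_dist_le_mul (K := nndist x y) fun s hs t ht => by
    rw [hγ.2.2 s hs t ht, Real.dist_eq, coe_nndist, mul_comm]).continuousOn

lemma IsGeodSeg.dist_left_le (hγ : IsGeodSeg γ x y) {s : ℝ} (hs : s ∈ Set.Icc (0:ℝ) 1) :
    dist x (γ s) ≤ dist x y := by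
  rw [← hγ.1, hγ.2.2 0 ⟨le_rfl, zero_le_one⟩ s hs, hγ.1, zero_sub, abs_neg, abs_of_nonneg hs.1]
  exact mul_le_of_le_one_left dist_nonneg hs.2

lemma IsCAT.exists_isGeodSeg {k : ℝ} (hcat : IsCAT k X) (hk : k ≤ 0) (x y : X) :
    ∃ γ, IsGeodSeg γ x y :=
  hcat.1 x y fun h => absurd h hk.not_gt

/-- The CN inequality of Bruhat and Tits. -/
lemma IsCAT.exists_dist_midpoint_sq_le (hcat : IsCAT 0 X) (x y : X) :
    ∃ m, ∀ z, dist z m ^ 2 ≤ dist z x ^ 2 / 2 + dist z y ^ 2 / 2 - dist x y ^ 2 / 4 := by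
  obtain ⟨γ, hγ⟩ := hcat.exists_isGeodSeg le_rfl x y
  refine ⟨γ (1 / 2), fun z => ?_⟩
  have hcmp := hcat.2 x y z γ hγ (fun h => absurd h (lt_irrefl 0)) (1 / 2) (by norm_num)
  simp only [cmpDist, if_true] at hcmp
  rw [dist_comm z x, dist_comm z y]
  have htri := mul_self_le_mul_self dist_nonneg (dist_triangle_right x y z)
  rw [Real.le_sqrt dist_nonneg (by nlinarith [sq_nonneg (dist x z - dist y z)])] at hcmp
  linarith

lemma lipschitzWith_one_of_locally {f : X → Y} (hgeod : ∀ x y : X, ∃ γ, IsGeodSeg γ x y)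
    (hloc : ∀ x, ∃ δ > 0, ∀ z, dist x z < δ → dist (f x) (f z) ≤ dist x z) :
    LipschitzWith 1 f := by
  have hf : Continuous f := Metric.continuous_iff.2 fun b ε hε => by
    obtain ⟨δ, hδ, hb⟩ := hloc b
    refine ⟨min δ ε, lt_min hδ hε, fun a ha => ?_⟩
    rw [dist_comm] at ha ⊢
    exact (hb a (ha.trans_le (min_le_left _ _))).trans_lt (ha.trans_le (min_le_right _ _))
  refine LipschitzWith.of_dist_le_mul fun x y => ?_
  obtain ⟨γ, hγ⟩ := hgeod x y
  set D := dist x y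
  let S := {s : ℝ | dist (f x) (f (γ s)) ≤ s * D}
  suffices Set.Icc 0 1 ⊆ S by simpa [S, hγ.2.1] using this ⟨zero_le_one, le_rfl⟩
  refine IsClosed.Icc_subset_of_forall_mem_nhdsWithin ?_ (by simp [S, hγ.1]) ?_
  · have hc : ContinuousOn (fun s => dist (f x) (f (γ s)) - s * D) (Set.Icc 0 1) :=
      ((continuous_const.dist hf).comp_continuousOn hγ.continuousOn).sub
        (continuousOn_id.mul continuousOn_const)
    convert hc.preimage_isClosed_of_isClosed isClosed_Icc (isClosed_Iic (a := 0)) using 1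
    ext s
    simp [S, and_comm]
  · rintro s ⟨hs, hs0, hs1⟩
    obtain ⟨δ, hδ, hδloc⟩ := hloc (γ s)
    have hD : 0 ≤ D := dist_nonneg
    have hu : s < min 1 (s + δ / (D + 1)) :=
      lt_min hs1 (lt_add_of_pos_right s (div_pos hδ (by linarith)))
    refine mem_nhdsGT_iff_exists_Ioo_subset.2 ⟨_, hu, fun t ht => ?_⟩
    have ht1 : t ≤ 1 := ht.2.le.trans (min_le_left _ _)
    have hdist : dist (γ s) (γ t) = (t - s) * D := by
      rw [hγ.2.2 s ⟨hs0, hs1.le⟩ t ⟨hs0.trans ht.1.le, ht1⟩, abs_sub_comm,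
        abs_of_pos (sub_pos.2 ht.1)]
    have hlt : (t - s) * (D + 1) < δ :=
      (lt_div_iff₀ (by linarith)).1 (by linarith [ht.2.trans_le (min_le_right _ _)])
    calc dist (f x) (f (γ t)) ≤ dist (f x) (f (γ s)) + dist (f (γ s)) (f (γ t)) :=
          dist_triangle _ _ _
      _ ≤ s * D + (t - s) * D := by
          refine add_le_add hs (hdist ▸ hδloc _ ?_)
          nlinarith [ht.1]
      _ = t * D := by ring

end Geodesic

section MaxDist

variable {ι X : Type*} [MetricSpace X] {s : Finset ι} (hs : s.Nonempty) (p : ι → X)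

noncomputable def maxDist (z : X) : ℝ := s.sup' hs fun i => dist z (p i)

variable {hs p}

lemma dist_le_maxDist {i : ι} (hi : i ∈ s) (z : X) : dist z (p i) ≤ maxDist hs p z :=
  Finset.le_sup' (fun i => dist z (p i)) hi

lemma continuous_maxDist : Continuous (maxDist hs p) :=
  Continuous.finset_sup'_apply hs fun _ _ => continuous_id.dist continuous_const

lemma maxDist_map_le {f : X → X} (hf : LipschitzWith 1 f)
    (hp : ∀ i ∈ s, ∃ j ∈ s, f (p j) = p i) (z : X) : maxDist hs p (f z) ≤ maxDist hs p z :=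
  Finset.sup'_le _ _ fun i hi => by
    obtain ⟨j, hj, hji⟩ := hp i hi
    calc dist (f z) (p i) = dist (f z) (f (p j)) := by rw [hji]
      _ ≤ dist z (p j) := by simpa using hf.dist_le_mul z (p j)
      _ ≤ maxDist hs p z := dist_le_maxDist hj z

lemma IsCAT.eq_of_maxDist_le (hcat : IsCAT 0 X) {c c' : X}
    (hc : ∀ z, maxDist hs p c ≤ maxDist hs p z) (hc' : maxDist hs p c' ≤ maxDist hs p c) :
    c' = c := by
  by_contra hne
  obtain ⟨m, hm⟩ := hcat.exists_dist_midpoint_sq_le c c'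
  have hpos : 0 < dist c c' := dist_pos.2 (Ne.symm hne)
  refine (hc m).not_gt ((Finset.sup'_lt_iff _).2 fun j hj => ?_)
  have hM : 0 ≤ maxDist hs p c := dist_nonneg.trans (dist_le_maxDist hj c)
  have h1 := dist_le_maxDist (hs := hs) (p := p) hj c
  have h2 := (dist_le_maxDist (hs := hs) (p := p) hj c').trans hc'
  have h3 := hm (p j)
  rw [dist_comm (p j), dist_comm (p j), dist_comm (p j)] at h3
  refine lt_of_pow_lt_pow_left₀ 2 hM ?_
  nlinarith [mul_self_le_mul_self dist_nonneg h1, mul_self_le_mul_self dist_nonneg h2]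

end MaxDist

section Realization

variable {V X : Type*} [MetricSpace X] {K : SimpComplex V}

lemma SimpComplex.ne_empty_of_mem {σ : Finset V} (hσ : σ ∈ K.faces) : σ ≠ ∅ :=
  fun h => K.not_empty_mem (h ▸ hσ)

lemma SimpComplex.singleton_mem {σ : Finset V} (hσ : σ ∈ K.faces) {v : V} (hv : v ∈ σ) :
    {v} ∈ K.faces :=
  K.down_closed σ hσ {v} (Finset.singleton_subset_iff.2 hv) (Finset.singleton_ne_empty v)

variable [DecidableEq V]

noncomputable def SimpComplex.vertexFinset (K : SimpComplex V) : Finset V :=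
  K.finite.toFinset.biUnion id

lemma SimpComplex.mem_vertexFinset {v : V} : v ∈ K.vertexFinset ↔ {v} ∈ K.faces := by
  simp only [SimpComplex.vertexFinset, Finset.mem_biUnion, Set.Finite.mem_toFinset, id]
  exact ⟨fun ⟨σ, hσ, hv⟩ => K.singleton_mem hσ hv,
    fun hv => ⟨{v}, hv, Finset.mem_singleton_self v⟩⟩

lemma MetricRealization.compactSpace (R : MetricRealization K X) : CompactSpace X :=
  ⟨by rw [← R.realize_cover]; exact K.finite.isCompact_biUnion R.realize_compact⟩

variable (R : MetricRealization K X)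

lemma MetricRealization.vertexPt_mem {σ : Finset V} (hσ : σ ∈ K.faces) {v : V} (hv : v ∈ σ) :
    R.vertexPt v ∈ R.realize σ :=
  R.realize_mono {v} (K.singleton_mem hσ hv) σ hσ (Finset.singleton_subset_iff.2 hv)
    (R.realize_vertex v (K.singleton_mem hσ hv) ▸ rfl)

lemma MetricRealization.vertexPt_injOn : Set.InjOn R.vertexPt {v | {v} ∈ K.faces} :=
  fun v hv w hw h => by
    by_contra hne
    have hmem : R.vertexPt v ∈ R.realize {v} ∩ R.realize {w} := by
      rw [R.realize_vertex v hv, R.realize_vertex w hw, h]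
      exact ⟨rfl, rfl⟩
    rw [R.realize_inter _ hv _ hw, Finset.singleton_inter_of_notMem (by simpa using hne),
      R.realize_empty] at hmem
    exact hmem

lemma MetricRealization.exists_mem_realize (x : X) : ∃ σ ∈ K.faces, x ∈ R.realize σ := by
  simpa using R.realize_cover.ge (Set.mem_univ x)

lemma MetricRealization.inter_mem_faces {σ τ : Finset V} (hσ : σ ∈ K.faces) (hτ : τ ∈ K.faces)
    {x : X} (hxσ : x ∈ R.realize σ) (hxτ : x ∈ R.realize τ) :
    σ ∩ τ ∈ K.faces ∧ x ∈ R.realize (σ ∩ τ) := by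
  have hx : x ∈ R.realize (σ ∩ τ) := R.realize_inter σ hσ τ hτ ▸ ⟨hxσ, hxτ⟩
  refine ⟨K.down_closed σ hσ _ Finset.inter_subset_left fun h => ?_, hx⟩
  rw [h, R.realize_empty] at hx
  exact hx

lemma MetricRealization.isClosed_biUnion (P : Finset V → Prop) :
    IsClosed (⋃ τ ∈ {τ | τ ∈ K.faces ∧ P τ}, R.realize τ) :=
  (K.finite.subset fun _ h => h.1).isClosed_biUnion fun τ h => (R.realize_compact τ h.1).isClosed

lemma MetricRealization.exists_forall_dist_lt (x : X) :
    ∃ δ > 0, ∀ z, dist x z < δ → ∃ τ ∈ K.faces, x ∈ R.realize τ ∧ z ∈ R.realize τ := by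
  have hx : x ∉ ⋃ τ ∈ {τ | τ ∈ K.faces ∧ x ∉ R.realize τ}, R.realize τ := by simp
  obtain ⟨δ, hδ, hball⟩ :=
    Metric.isOpen_iff.1 (R.isClosed_biUnion (x ∉ R.realize ·)).isOpen_compl x hx
  refine ⟨δ, hδ, fun z hz => ?_⟩
  obtain ⟨τ, hτ, hzτ⟩ := R.exists_mem_realize z
  by_contra! h
  exact hball (Metric.mem_ball'.2 hz) (Set.mem_biUnion ⟨hτ, fun hxτ => h τ hτ hxτ hzτ⟩ hzτ)

lemma MetricRealization.vertexFinset_nonempty [Nonempty X] (R : MetricRealization K X) :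
    K.vertexFinset.Nonempty := by
  obtain ⟨σ, hσ, -⟩ := R.exists_mem_realize (Classical.arbitrary X)
  obtain ⟨v, hv⟩ := Finset.nonempty_iff_ne_empty.2 (K.ne_empty_of_mem hσ)
  exact ⟨v, K.mem_vertexFinset.2 (K.singleton_mem hσ hv)⟩

end Realization

section BaryCoord

variable {V X : Type*} [MetricSpace X]

def stdSimplexOn (σ : Finset V) : Set (V → ℝ) :=
  {a | (∀ v, 0 ≤ a v) ∧ (∀ v ∉ σ, a v = 0) ∧ ∑ v ∈ σ, a v = 1}

lemma nonempty_of_mem_stdSimplexOn {σ : Finset V} {a : V → ℝ} (ha : a ∈ stdSimplexOn σ) :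
    σ.Nonempty := by
  by_contra h
  simpa [Finset.not_nonempty_iff_eq_empty.1 h] using ha.2.2

variable [DecidableEq V] {K : SimpComplex V} {R : MetricRealization K X}

lemma mem_stdSimplexOn_inter {σ τ : Finset V} {a : V → ℝ} (hσ : a ∈ stdSimplexOn σ)
    (hτ : a ∈ stdSimplexOn τ) : a ∈ stdSimplexOn (σ ∩ τ) := by
  refine ⟨hσ.1, fun v hv => ?_, ?_⟩
  · by_cases hvσ : v ∈ σ
    · exact hτ.2.1 v fun hvτ => hv (Finset.mem_inter.2 ⟨hvσ, hvτ⟩)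
    · exact hσ.2.1 v hvσ
  · rw [← hσ.2.2]
    refine Finset.sum_subset Finset.inter_subset_left fun v hvσ hv => hτ.2.1 v fun hvτ => ?_
    exact hv (Finset.mem_inter.2 ⟨hvσ, hvτ⟩)

lemma comp_symm_mem_stdSimplexOn_image {σ : Finset V} {a : V → ℝ} (ha : a ∈ stdSimplexOn σ)
    (e : V ≃ V) : a ∘ e.symm ∈ stdSimplexOn (σ.image e) := by
  refine ⟨fun v => ha.1 _, fun v hv => ha.2.1 _ fun h => hv ?_, ?_⟩
  · exact Finset.mem_image.2 ⟨_, h, e.apply_symm_apply v⟩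
  · rw [Finset.sum_image e.injective.injOn]
    simpa using ha.2.2

variable (R) in
/-- Barycentric coordinates on the realization of `σ` as a regular simplex with unit edges
(whence the factor `2`). -/
structure IsBaryCoord (σ : Finset V) (c : X → V → ℝ) : Prop where
  mapsTo : Set.MapsTo c (R.realize σ) (stdSimplexOn σ)
  surjOn : Set.SurjOn c (R.realize σ) (stdSimplexOn σ)
  two_mul_dist_sq : ∀ x ∈ R.realize σ, ∀ y ∈ R.realize σ,
    2 * dist x y ^ 2 = ∑ v ∈ σ, (c x v - c y v) ^ 2
  vertexPt : ∀ v ∈ σ, c (R.vertexPt v) = Pi.single v 1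

namespace IsBaryCoord

variable {σ : Finset V} {c : X → V → ℝ}

lemma injOn (hc : IsBaryCoord R σ c) : Set.InjOn c (R.realize σ) := fun x hx y hy h => by
  simpa [h] using hc.two_mul_dist_sq x hx y hy

lemma congr (hc : IsBaryCoord R σ c) (hσ : σ ∈ K.faces) {c' : X → V → ℝ}
    (h : ∀ x ∈ R.realize σ, c x = c' x) : IsBaryCoord R σ c' where
  mapsTo x hx := h x hx ▸ hc.mapsTo hx
  surjOn a ha := by
    obtain ⟨x, hx, rfl⟩ := hc.surjOn ha
    exact ⟨x, hx, (h x hx).symm⟩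
  two_mul_dist_sq x hx y hy := by rw [← h x hx, ← h y hy]; exact hc.two_mul_dist_sq x hx y hy
  vertexPt v hv := by rw [← h _ (R.vertexPt_mem hσ hv)]; exact hc.vertexPt v hv

lemma two_mul_dist_vertexPt_sq (hc : IsBaryCoord R σ c) (hσ : σ ∈ K.faces) {x : X}
    (hx : x ∈ R.realize σ) {v : V} (hv : v ∈ σ) :
    2 * dist x (R.vertexPt v) ^ 2 = ∑ u ∈ σ, c x u ^ 2 - 2 * c x v + 1 := by
  have hsq (u : V) : (c x u - (Pi.single v 1 : V → ℝ) u) ^ 2 =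
      c x u ^ 2 + if u = v then 1 - 2 * c x u else 0 := by
    by_cases huv : u = v
    · subst huv
      simp only [Pi.single_eq_same, if_true]
      ring
    · simp [huv]
  rw [hc.two_mul_dist_sq x hx _ (R.vertexPt_mem hσ hv), hc.vertexPt v hv]
  simp only [hsq, Finset.sum_add_distrib, Finset.sum_ite_eq', hv, if_true]
  ring

end IsBaryCoord

end BaryCoord

section Equilateral

variable {V X : Type*} [DecidableEq V] [MetricSpace X] {K : SimpComplex V}
  {R : MetricRealization K X}

lemma isBaryCoord_of_isometry {σ : Finset V} {φ : X → EuclideanSpace ℝ (Fin σ.card)}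
    (hbij : Set.BijOn φ (R.realize σ) (convexHull ℝ (Set.range (regVertex σ.card))))
    (hiso : ∀ x ∈ R.realize σ, ∀ y ∈ R.realize σ, dist (φ x) (φ y) = dist x y)
    (E : σ ≃ Fin σ.card) (hE : ∀ v : σ, φ (R.vertexPt v) = regVertex σ.card (E v)) :
    IsBaryCoord R σ fun x v => if hv : v ∈ σ then √2 * φ x (E ⟨v, hv⟩) else 0 := by
  set c : X → V → ℝ := fun x v => if hv : v ∈ σ then √2 * φ x (E ⟨v, hv⟩) else 0
  have hsum (g : V → ℝ) : ∑ v ∈ σ, g v = ∑ j, g (E.symm j) := by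
    rw [← Finset.sum_coe_sort σ, ← E.symm.sum_comp]
  have hcE (x : X) (j : Fin σ.card) : c x (E.symm j) = √2 * φ x j := by
    simp [c]
  refine ⟨fun x hx => ?_, fun a ha => ?_, fun x hx y hy => ?_, fun v hv => ?_⟩
  · have hx' := (mem_convexHull_regVertex_iff _).1 (hbij.mapsTo hx)
    refine ⟨fun v => ?_, fun v hv => dif_neg hv, ?_⟩
    · by_cases hv : v ∈ σ
      · simpa [c, hv] using hx'.1 (E ⟨v, hv⟩)
      · simp [c, hv]
    · rw [hsum]
      simpa [hcE] using hx'.2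
  · let y : EuclideanSpace ℝ (Fin σ.card) := WithLp.toLp 2 fun j => (√2)⁻¹ * a (E.symm j)
    have hy : (fun j => √2 * y j) = fun j => a (E.symm j) := by
      ext j
      simp [y]
    obtain ⟨x, hx, hxy⟩ := hbij.surjOn ((mem_convexHull_regVertex_iff y).2
      (hy ▸ ⟨fun j => ha.1 _, (hsum a).symm.trans ha.2.2⟩))
    refine ⟨x, hx, funext fun v => ?_⟩
    by_cases hv : v ∈ σ
    · simpa [c, hv, hxy] using congrFun hy (E ⟨v, hv⟩)
    · simp [c, hv, ha.2.1 v hv]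
  · rw [← hiso x hx y hy, EuclideanSpace.dist_sq_eq, hsum, Finset.mul_sum]
    refine Finset.sum_congr rfl fun j _ => ?_
    rw [hcE, hcE, Real.dist_eq, sq_abs]
    linear_combination -(φ x j - φ y j) ^ 2 * Real.mul_self_sqrt zero_le_two
  · ext u
    by_cases hu : u ∈ σ
    · simp [c, hu, hE ⟨v, hv⟩, regVertex_apply, Pi.single_apply, Subtype.ext_iff]
    · simp [c, hu, show u ≠ v from fun h => hu (h ▸ hv)]

lemma exists_isBaryCoord (heq : EquilateralFlat K R) {σ : Finset V} (hσ : σ ∈ K.faces) :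
    ∃ c, IsBaryCoord R σ c := by
  obtain ⟨φ, hbij, hiso, hvert⟩ := heq σ hσ
  choose idx hidx using hvert
  have hinj : Function.Injective fun v : σ => idx v v.2 := by
    rintro ⟨v, hv⟩ ⟨w, hw⟩ h
    refine Subtype.ext (R.vertexPt_injOn (K.singleton_mem hσ hv) (K.singleton_mem hσ hw) ?_)
    refine hbij.injOn (R.vertexPt_mem hσ hv) (R.vertexPt_mem hσ hw) ?_
    rw [hidx v hv, hidx w hw]
    exact congrArg _ h
  exact ⟨_, isBaryCoord_of_isometry hbij hiso
    (Equiv.ofBijective _ ((Fintype.bijective_iff_injective_and_card _).2 ⟨hinj, by simp⟩))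
    fun v => hidx v v.2⟩

end Equilateral

namespace IsBaryCoord

variable {V X : Type*} [DecidableEq V] [MetricSpace X] {K : SimpComplex V}
  {R : MetricRealization K X}

lemma apply_eq_of_subset {ρ τ : Finset V} {c c' : X → V → ℝ} (hc : IsBaryCoord R τ c)
    (hc' : IsBaryCoord R ρ c') (hτ : τ ∈ K.faces) (hρ : ρ ∈ K.faces) (hsub : ρ ⊆ τ) {x : X}
    (hx : x ∈ R.realize ρ) : c x = c' x := by
  have hxτ := R.realize_mono ρ hρ τ hτ hsub hx
  obtain ⟨hb0, hbτ, hb1⟩ := hc.mapsTo hxτ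
  obtain ⟨-, haρ, ha1⟩ := hc'.mapsTo hx
  have hτv := fun v (hv : v ∈ ρ) => hc.two_mul_dist_vertexPt_sq hτ hxτ (hsub hv)
  have hρv := fun v (hv : v ∈ ρ) => hc'.two_mul_dist_vertexPt_sq hρ hx hv
  set b := c x
  set a := c' x
  obtain ⟨d, hd2⟩ : ∃ d : ℝ, 2 * d = ∑ u ∈ τ, b u ^ 2 - ∑ u ∈ ρ, a u ^ 2 :=
    ⟨_, mul_div_cancel₀ _ two_ne_zero⟩
  have hshift : ∀ v ∈ ρ, b v = a v + d := fun v hv => by linarith [hτv v hv, hρv v hv]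
  set T := ∑ u ∈ τ \ ρ, b u ^ 2
  have hsplit : T + ∑ u ∈ ρ, b u ^ 2 = ∑ u ∈ τ, b u ^ 2 := Finset.sum_sdiff hsub
  have hρsq : ∑ u ∈ ρ, b u ^ 2 = ∑ u ∈ ρ, a u ^ 2 + 2 * d + ρ.card * d ^ 2 := by
    rw [Finset.sum_congr rfl fun u hu => by rw [hshift u hu]]
    simp only [add_sq, Finset.sum_add_distrib, ← Finset.sum_mul, ← Finset.mul_sum, ha1,
      Finset.sum_const, nsmul_eq_mul]
    ring
  have hcard : (1 : ℝ) ≤ ρ.card := by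
    exact_mod_cast (nonempty_of_mem_stdSimplexOn (hc'.mapsTo hx)).card_pos
  have hT : 0 ≤ T := Finset.sum_nonneg fun u _ => sq_nonneg (b u)
  have hzero : ρ.card * d ^ 2 + T = 0 := by linarith
  have hd : d = 0 := by nlinarith [sq_nonneg d]
  have hT0 : T = 0 := by nlinarith [sq_nonneg d]
  ext v
  by_cases hvρ : v ∈ ρ
  · rw [hshift v hvρ, hd, add_zero]
  rw [haρ v hvρ]
  by_cases hvτ : v ∈ τ
  · exact pow_eq_zero_iff two_ne_zero |>.1 <| (Finset.sum_eq_zero_iff_of_nonneg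
      fun u _ => sq_nonneg (b u)).1 hT0 v (Finset.mem_sdiff.2 ⟨hvτ, hvρ⟩)
  · exact hbτ v hvτ

end IsBaryCoord

section Global

variable {V X : Type*} [DecidableEq V] [MetricSpace X] {K : SimpComplex V}
  {R : MetricRealization K X} (heq : EquilateralFlat K R)

noncomputable def baryCoord (x : X) : V → ℝ :=
  (exists_isBaryCoord heq (R.exists_mem_realize x).choose_spec.1).choose x

lemma isBaryCoord_baryCoord {τ : Finset V} (hτ : τ ∈ K.faces) :
    IsBaryCoord R τ (baryCoord heq) := by
  obtain ⟨c, hc⟩ := exists_isBaryCoord heq hτ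
  refine hc.congr hτ fun x hx => ?_
  obtain ⟨hσ, hxσ⟩ := (R.exists_mem_realize x).choose_spec
  obtain ⟨hρ, hxρ⟩ := R.inter_mem_faces hσ hτ hxσ hx
  obtain ⟨c', hc'⟩ := exists_isBaryCoord heq hρ
  rw [hc.apply_eq_of_subset hc' hτ hρ Finset.inter_subset_right hxρ,
    ← (exists_isBaryCoord heq hσ).choose_spec.apply_eq_of_subset hc' hσ hρ
      Finset.inter_subset_left hxρ]
  rfl

lemma baryCoord_injective : Function.Injective (baryCoord heq) := fun x y h => by
  obtain ⟨σ, hσ, hxσ⟩ := R.exists_mem_realize x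
  obtain ⟨τ, hτ, hyτ⟩ := R.exists_mem_realize y
  have hbσ := isBaryCoord_baryCoord heq hσ
  have hbτ := isBaryCoord_baryCoord heq hτ
  have ha := mem_stdSimplexOn_inter (hbσ.mapsTo hxσ) (h ▸ hbτ.mapsTo hyτ)
  have hρ : σ ∩ τ ∈ K.faces :=
    K.down_closed σ hσ _ Finset.inter_subset_left (nonempty_of_mem_stdSimplexOn ha).ne_empty
  obtain ⟨z, hz, hzx⟩ := (isBaryCoord_baryCoord heq hρ).surjOn ha
  have hzσ := R.realize_mono _ hρ σ hσ Finset.inter_subset_left hz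
  have hzτ := R.realize_mono _ hρ τ hτ Finset.inter_subset_right hz
  exact (hbσ.injOn hzσ hxσ hzx).symm.trans (hbτ.injOn hzτ hyτ (hzx.trans h))

end Global

def SimpComplex.IsAutomorphism {V : Type*} [DecidableEq V] (K : SimpComplex V) (e : V ≃ V) :
    Prop :=
  ∀ σ : Finset V, σ ∈ K.faces ↔ σ.image e ∈ K.faces

section Automorphism

variable {V X : Type*} [DecidableEq V] [MetricSpace X] [Nonempty X] {K : SimpComplex V}
  {R : MetricRealization K X} (heq : EquilateralFlat K R) {e : V ≃ V}

variable (e) in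
noncomputable def autMap (x : X) : X :=
  Function.invFun (baryCoord heq) (baryCoord heq x ∘ e.symm)

lemma autMap_spec (he : K.IsAutomorphism e) {τ : Finset V} (hτ : τ ∈ K.faces) {x : X}
    (hx : x ∈ R.realize τ) :
    autMap heq e x ∈ R.realize (τ.image e) ∧
      baryCoord heq (autMap heq e x) = baryCoord heq x ∘ e.symm := by
  obtain ⟨y, hy, hyx⟩ := (isBaryCoord_baryCoord heq ((he τ).1 hτ)).surjOn
    (comp_symm_mem_stdSimplexOn_image ((isBaryCoord_baryCoord heq hτ).mapsTo hx) e)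
  have : autMap heq e x = y :=
    baryCoord_injective heq ((Function.invFun_eq ⟨y, hyx⟩).trans hyx.symm)
  exact this ▸ ⟨hy, hyx⟩

lemma dist_autMap (he : K.IsAutomorphism e) {τ : Finset V} (hτ : τ ∈ K.faces) {x y : X}
    (hx : x ∈ R.realize τ) (hy : y ∈ R.realize τ) :
    dist (autMap heq e x) (autMap heq e y) = dist x y := by
  obtain ⟨hx', hbx⟩ := autMap_spec heq he hτ hx
  obtain ⟨hy', hby⟩ := autMap_spec heq he hτ hy
  have h := (isBaryCoord_baryCoord heq ((he τ).1 hτ)).two_mul_dist_sq _ hx' _ hy'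
  rw [hbx, hby, Finset.sum_image e.injective.injOn] at h
  simp only [Function.comp_apply, Equiv.symm_apply_apply] at h
  rw [← (isBaryCoord_baryCoord heq hτ).two_mul_dist_sq x hx y hy] at h
  exact (sq_eq_sq₀ dist_nonneg dist_nonneg).1 (by linarith)

lemma autMap_vertexPt (he : K.IsAutomorphism e) {v : V} (hv : {v} ∈ K.faces) :
    autMap heq e (R.vertexPt v) = R.vertexPt (e v) := by
  have hev : {e v} ∈ K.faces := by simpa using (he {v}).1 hv
  simpa [R.realize_vertex _ hev] using
    (autMap_spec heq he hv (R.vertexPt_mem hv (Finset.mem_singleton_self v))).1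

lemma exists_autMap_vertexPt_eq (he : K.IsAutomorphism e) {v : V} (hv : {v} ∈ K.faces) :
    ∃ w, {w} ∈ K.faces ∧ autMap heq e (R.vertexPt w) = R.vertexPt v := by
  have hw : {e.symm v} ∈ K.faces := (he _).2 (by simpa using hv)
  exact ⟨e.symm v, hw, by rw [autMap_vertexPt heq he hw, e.apply_symm_apply]⟩

lemma lipschitzWith_autMap (hgeod : ∀ x y : X, ∃ γ, IsGeodSeg γ x y)
    (he : K.IsAutomorphism e) : LipschitzWith 1 (autMap heq e) :=
  lipschitzWith_one_of_locally hgeod fun x => by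
    obtain ⟨δ, hδ, h⟩ := R.exists_forall_dist_lt x
    refine ⟨δ, hδ, fun z hz => ?_⟩
    obtain ⟨τ, hτ, hxτ, hzτ⟩ := h z hz
    exact (dist_autMap heq he hτ hxτ hzτ).le

end Automorphism

section Center

variable {V X : Type*} [DecidableEq V] [MetricSpace X] {K : SimpComplex V}
  {R : MetricRealization K X}

lemma IsBaryCoord.two_mul_sq_of_forall_dist_eq {σ : Finset V} {c : X → V → ℝ}
    (hc : IsBaryCoord R σ c) (hσ : σ ∈ K.faces) {x : X} (hx : x ∈ R.realize σ) {r : ℝ}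
    (hr : ∀ v ∈ σ, dist x (R.vertexPt v) = r) : 2 * r ^ 2 = 1 - (σ.card : ℝ)⁻¹ := by
  obtain ⟨-, -, hsum⟩ := hc.mapsTo hx
  obtain ⟨v₀, hv₀⟩ := nonempty_of_mem_stdSimplexOn (hc.mapsTo hx)
  have hF := fun v (hv : v ∈ σ) => (hr v hv ▸ hc.two_mul_dist_vertexPt_sq hσ hx hv)
  have hconst : ∀ v ∈ σ, c x v = c x v₀ := fun v hv => by linarith [hF v hv, hF v₀ hv₀]
  rw [Finset.sum_congr rfl hconst, Finset.sum_const, nsmul_eq_mul] at hsum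
  have hsq := hF v₀ hv₀
  rw [Finset.sum_congr rfl fun v hv => by rw [hconst v hv], Finset.sum_const,
    nsmul_eq_mul] at hsq
  have hcard : (σ.card : ℝ) ≠ 0 := by
    rintro h
    simp [h] at hsum
  rw [hsq, eq_inv_of_mul_eq_one_right hsum]
  field_simp
  ring

lemma IsBaryCoord.one_le_two_mul_dist_vertexPt_sq {τ : Finset V} {c : X → V → ℝ}
    (hc : IsBaryCoord R τ c) (hτ : τ ∈ K.faces) {x : X} (hx : x ∈ R.realize τ) {v : V}
    (hv : v ∈ τ) (h0 : c x v = 0) : 1 ≤ 2 * dist x (R.vertexPt v) ^ 2 := by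
  rw [hc.two_mul_dist_vertexPt_sq hτ hx hv, h0]
  linarith [Finset.sum_nonneg fun u (_ : u ∈ τ) => sq_nonneg (c x u)]

lemma exists_mem_faces_of_two_mul_dist_sq_lt (heq : EquilateralFlat K R)
    (hgeod : ∀ x y : X, ∃ γ, IsGeodSeg γ x y) {v : V} (hv : {v} ∈ K.faces) {x : X}
    (hvx : 2 * dist (R.vertexPt v) x ^ 2 < 1) : ∃ τ ∈ K.faces, v ∈ τ ∧ x ∈ R.realize τ := by
  by_contra hno
  set A := ⋃ τ ∈ {τ | τ ∈ K.faces ∧ v ∈ τ}, R.realize τ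
  set B := ⋃ τ ∈ {τ | τ ∈ K.faces ∧ v ∉ τ}, R.realize τ
  have hcover (z : X) : z ∈ A ∪ B := by
    obtain ⟨τ, hτ, hzτ⟩ := R.exists_mem_realize z
    by_cases hvτ : v ∈ τ
    · exact Or.inl (Set.mem_biUnion ⟨hτ, hvτ⟩ hzτ)
    · exact Or.inr (Set.mem_biUnion ⟨hτ, hvτ⟩ hzτ)
  have hvA : R.vertexPt v ∈ A := Set.mem_biUnion ⟨hv, Finset.mem_singleton_self v⟩
    (R.vertexPt_mem hv (Finset.mem_singleton_self v))
  have hxB : x ∈ B := (hcover x).resolve_left fun h => hno (by simpa [A, and_assoc] using h)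
  obtain ⟨γ, hγ⟩ := hgeod (R.vertexPt v) x
  obtain ⟨_, ⟨s, hs, rfl⟩, hsA, hsB⟩ := isPreconnected_closed_iff.1
    ((isConnected_Icc zero_le_one).image γ hγ.continuousOn).isPreconnected A B
    (R.isClosed_biUnion (v ∈ ·)) (R.isClosed_biUnion (v ∉ ·)) (fun z _ => hcover z)
    ⟨_, ⟨0, ⟨le_rfl, zero_le_one⟩, hγ.1⟩, hvA⟩ ⟨_, ⟨1, ⟨zero_le_one, le_rfl⟩, hγ.2.1⟩, hxB⟩
  simp only [A, B, Set.mem_iUnion, Set.mem_ofPred_eq, exists_prop] at hsA hsB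
  obtain ⟨τ, ⟨hτ, hvτ⟩, hsτ⟩ := hsA
  obtain ⟨τ', ⟨hτ', hvτ'⟩, hsτ'⟩ := hsB
  have h0 := ((isBaryCoord_baryCoord heq hτ').mapsTo hsτ').2.1 v hvτ'
  have h1 := (isBaryCoord_baryCoord heq hτ).one_le_two_mul_dist_vertexPt_sq hτ hsτ hvτ h0
  have h2 := mul_self_le_mul_self dist_nonneg (hγ.dist_left_le hs)
  rw [dist_comm] at h1
  nlinarith

lemma eq_of_forall_dist_vertexPt_eq (heq : EquilateralFlat K R) {c : X} {r : ℝ}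
    (hr : ∀ v, {v} ∈ K.faces → dist c (R.vertexPt v) = r) {σ τ : Finset V}
    (hσ : σ ∈ K.faces) (hτ : τ ∈ K.faces) (hcσ : c ∈ R.realize σ)
    (hcτ : c ∈ R.realize τ) : σ = τ := by
  obtain ⟨hστ, hcστ⟩ := R.inter_mem_faces hσ hτ hcσ hcτ
  have hsq : ∀ ρ ∈ K.faces, c ∈ R.realize ρ → 2 * r ^ 2 = 1 - (ρ.card : ℝ)⁻¹ :=
    fun ρ hρ hcρ => (isBaryCoord_baryCoord heq hρ).two_mul_sq_of_forall_dist_eq hρ hcρ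
      fun v hv => hr v (K.singleton_mem hρ hv)
  have hcard : ∀ ρ ∈ K.faces, c ∈ R.realize ρ → (σ ∩ τ).card = ρ.card := by
    intro ρ hρ hcρ
    have := (hsq _ hστ hcστ).symm.trans (hsq _ hρ hcρ)
    exact_mod_cast inv_injective (by linarith : ((σ ∩ τ).card : ℝ)⁻¹ = (ρ.card : ℝ)⁻¹)
  rw [← Finset.eq_of_subset_of_card_le Finset.inter_subset_left (hcard σ hσ hcσ).ge,
    Finset.eq_of_subset_of_card_le Finset.inter_subset_right (hcard τ hτ hcτ).ge]

lemma exists_simplex_of_forall_dist_vertexPt_eq (heq : EquilateralFlat K R)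
    (hgeod : ∀ x y : X, ∃ γ, IsGeodSeg γ x y) {c : X} {r : ℝ}
    (hr : ∀ v, {v} ∈ K.faces → dist c (R.vertexPt v) = r) :
    ∃ σ ∈ K.faces, ∀ τ : Finset V, τ ∈ K.faces ↔ τ ≠ ∅ ∧ τ ⊆ σ := by
  obtain ⟨σ, hσ, hcσ⟩ := R.exists_mem_realize c
  have hrσ := (isBaryCoord_baryCoord heq hσ).two_mul_sq_of_forall_dist_eq hσ hcσ
    fun v hv => hr v (K.singleton_mem hσ hv)
  have hcard : (0 : ℝ) < (σ.card : ℝ)⁻¹ := by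
    simpa using Finset.nonempty_iff_ne_empty.2 (K.ne_empty_of_mem hσ)
  refine ⟨σ, hσ, fun τ => ⟨fun hτ => ⟨K.ne_empty_of_mem hτ, fun v hv => ?_⟩,
    fun h => K.down_closed σ hσ τ h.2 h.1⟩⟩
  obtain ⟨τ', hτ', hvτ', hcτ'⟩ := exists_mem_faces_of_two_mul_dist_sq_lt heq hgeod
    (K.singleton_mem hτ hv) (by rw [dist_comm, hr v (K.singleton_mem hτ hv)]; linarith)
  rwa [eq_of_forall_dist_vertexPt_eq heq hr hσ hτ' hcσ hcτ']

lemma exists_isFixedPt_autMap [Nonempty X] (heq : EquilateralFlat K R) (hcat : IsCAT 0 X) :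
    ∃ c : X, ∀ e, K.IsAutomorphism e → Function.IsFixedPt (autMap heq e) c := by
  have := R.compactSpace
  have hT := R.vertexFinset_nonempty
  obtain ⟨c, -, hc⟩ := isCompact_univ.exists_isMinOn Set.univ_nonempty
    (continuous_maxDist (hs := hT) (p := R.vertexPt)).continuousOn
  refine ⟨c, fun e he => hcat.eq_of_maxDist_le (fun z => hc (Set.mem_univ z)) ?_⟩
  refine maxDist_map_le (lipschitzWith_autMap heq (hcat.exists_isGeodSeg le_rfl) he)
    (fun v hv => ?_) c
  simpa [SimpComplex.mem_vertexFinset] using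
    exists_autMap_vertexPt_eq heq he (K.mem_vertexFinset.1 hv)

end Center

/-- Every vertex-transitive intrinsic simplicial complex that is CAT(0)
with the equilateral flat metric is a single simplex. -/
theorem vertex_transitive_cat0_equilateral_is_simplex {V X : Type*} [DecidableEq V]
    [MetricSpace X] [Nonempty X] (K : SimpComplex V) (R : MetricRealization K X)
    (heq : EquilateralFlat K R) (hcat : IsCAT 0 X) (htrans : VertexTransitive K) :
    ∃ σ ∈ K.faces, ∀ τ : Finset V, τ ∈ K.faces ↔ τ ≠ ∅ ∧ τ ⊆ σ := by
  have hgeod := hcat.exists_isGeodSeg le_rfl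
  obtain ⟨c, hc⟩ := exists_isFixedPt_autMap heq hcat
  have hle : ∀ v w, {v} ∈ K.faces → {w} ∈ K.faces →
      dist c (R.vertexPt w) ≤ dist c (R.vertexPt v) := by
    intro v w hv hw
    obtain ⟨e, he, rfl⟩ := htrans v w hv hw
    calc dist c (R.vertexPt (e v)) = dist (autMap heq e c) (autMap heq e (R.vertexPt v)) := by
          rw [(hc e he).eq, autMap_vertexPt heq he hv]
      _ ≤ dist c (R.vertexPt v) := by
          simpa using (lipschitzWith_autMap heq hgeod he).dist_le_mul c (R.vertexPt v)
  obtain ⟨v₀, hv₀⟩ := R.vertexFinset_nonempty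
  rw [SimpComplex.mem_vertexFinset] at hv₀
  exact exists_simplex_of_forall_dist_vertexPt_eq heq hgeod (r := dist c (R.vertexPt v₀))
    fun v hv => le_antisymm (hle _ _ hv₀ hv) (hle _ _ hv hv₀)

end MGC
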